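/- Let I be a monomial ideal of A with M(I) finite, and suppose there exist vertices a, b ∈ M(I) that are not reachable from one another in G(I), each of which either is adjacent to some vertex of G(I) or equals e_t for some t with X_t^2 ∉ I (i.e. the survival complex contains two distinct nontrivial or quasi-trivially connected components). Then the survival complex contains at least two truly isolated points: there exist distinct p, q ∈ M(I) such that X_i·X^p ∈ I and X_i·X^q ∈ I for every i. -/

import Mathlib

/-!
Call `s` a component sum of `a` if `s = c + d` with `c, d` nonzero and reachable from `a`. Two nonzero
vectors whose sum survives are equal or adjacent. Hence a maximal surviving component sum `p` of `a`
(one exists, by finiteness of `M(I)` and the hypothesis on `a`) is truly isolated: if `X_i X^p ∉ I`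
with `p = c + d`, then `c + e_i` is adjacent to `d`, so `(c + e_i) + d` is a larger surviving
component sum. And a surviving `p` is a component sum of only one component: if `p = c + d = c' + d'`
and `u = c ⊓ d'`, then `d — u — c'` when `u ≠ 0` (as `d + u ≤ p` and `u + c' ≤ p`), while `u = 0`
forces `c ≤ c'`, so that `c — d'`.
-/

open MvPolynomial

/-- An ideal of `k[X_1,…,X_n]` is a *monomial ideal* if it is generated by a set
of monomials. -/
def IsMonomialIdeal {k : Type*} [Field k] {n : ℕ}
    (I : Ideal (MvPolynomial (Fin n) k)) : Prop :=
  ∃ S : Set ((Fin n) →₀ ℕ),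
    I = Ideal.span ((fun a => (monomial a (1 : k) : MvPolynomial (Fin n) k)) '' S)

/-- `M(I)`: the vertices of the survival complex of `A/I`. -/
def survivors {k : Type*} [Field k] {n : ℕ}
    (I : Ideal (MvPolynomial (Fin n) k)) : Set ((Fin n) →₀ ℕ) :=
  {a | a ≠ 0 ∧ monomial a (1 : k) ∉ I}

/-- The survival graph `G(I)`: distinct vertices `a, b ∈ M(I)` are adjacent iff
`X^{a+b} ∉ I` (the 1-skeleton of the survival complex). -/
def survGraph {k : Type*} [Field k] {n : ℕ}
    (I : Ideal (MvPolynomial (Fin n) k)) : SimpleGraph ((Fin n) →₀ ℕ) where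
  Adj a b := a ≠ b ∧ a ∈ survivors I ∧ b ∈ survivors I ∧ monomial (a + b) (1 : k) ∉ I
  symm := by
    constructor
    rintro a b ⟨h1, h2, h3, h4⟩
    exact ⟨h1.symm, h3, h2, by rwa [add_comm]⟩
  loopless := by
    constructor
    rintro a ⟨h1, -⟩
    exact h1 rfl

section

variable {k : Type*} [Field k] {n : ℕ} {I : Ideal (MvPolynomial (Fin n) k)}

def IsTrulyIsolated (I : Ideal (MvPolynomial (Fin n) k)) (p : Fin n →₀ ℕ) : Prop :=
  p ∈ survivors I ∧ ∀ i, X i * monomial p (1 : k) ∈ I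

def IsComponentSum (I : Ideal (MvPolynomial (Fin n) k)) (a s : Fin n →₀ ℕ) : Prop :=
  ∃ c d, c ≠ 0 ∧ d ≠ 0 ∧ (survGraph I).Reachable a c ∧ (survGraph I).Reachable a d ∧ c + d = s

theorem monomial_one_mem_of_le {σ R : Type*} [CommSemiring R] {J : Ideal (MvPolynomial σ R)}
    {u v : σ →₀ ℕ} (h : u ≤ v) (hu : monomial u (1 : R) ∈ J) : monomial v (1 : R) ∈ J :=
  J.mem_of_dvd (monomial_dvd_monomial.mpr ⟨Or.inr h, one_dvd _⟩) hu

theorem X_mul_monomial_one {σ R : Type*} [CommSemiring R] (i : σ) (p : σ →₀ ℕ) :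
    X i * monomial p (1 : R) = monomial (p + Finsupp.single i 1) 1 := by
  rw [X, monomial_mul, one_mul, add_comm]

theorem survGraph_reachable_of_add_le {x y p : Fin n →₀ ℕ} (hx : x ≠ 0) (hy : y ≠ 0)
    (hp : monomial p (1 : k) ∉ I) (hxy : x + y ≤ p) : (survGraph I).Reachable x y := by
  have hxyI : monomial (x + y) (1 : k) ∉ I := fun h => hp (monomial_one_mem_of_le hxy h)
  by_cases hne : x = y
  · exact hne ▸ .refl x
  · exact SimpleGraph.Adj.reachable ⟨hne, ⟨hx, fun h => hxyI (monomial_one_mem_of_le le_self_add h)⟩,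
      ⟨hy, fun h => hxyI (monomial_one_mem_of_le le_add_self h)⟩, hxyI⟩

theorem survGraph_reachable_of_add_eq_add {c d c' d' : Fin n →₀ ℕ} (hc : c ≠ 0) (hd : d ≠ 0)
    (hc' : c' ≠ 0) (hd' : d' ≠ 0) (hsum : c + d = c' + d')
    (hp : monomial (c + d) (1 : k) ∉ I) : (survGraph I).Reachable c c' := by
  have hp' : monomial (c' + d') (1 : k) ∉ I := hsum ▸ hp
  have hcd := survGraph_reachable_of_add_le hc hd hp le_rfl
  have hd'c' := (survGraph_reachable_of_add_le hc' hd' hp' le_rfl).symm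
  by_cases hu : c ⊓ d' = 0
  · have hcc' : c ≤ c' := fun j => by
      have hj := DFunLike.congr_fun hsum j
      have hu' := DFunLike.congr_fun hu j
      simp only [Finsupp.add_apply, Finsupp.inf_apply, Finsupp.coe_zero, Pi.zero_apply] at hj hu'
      omega
    exact (survGraph_reachable_of_add_le hc hd' hp' (add_le_add hcc' le_rfl)).trans hd'c'
  · have hdu := survGraph_reachable_of_add_le hd hu hp
      (by rw [add_comm c]; exact add_le_add le_rfl inf_le_left)
    have huc' := survGraph_reachable_of_add_le hu hc' hp'
      (by rw [add_comm c']; exact add_le_add inf_le_right le_rfl)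
    exact hcd.trans (hdu.trans huc')

theorem IsComponentSum.reachable {a b p : Fin n →₀ ℕ} (ha : IsComponentSum I a p)
    (hb : IsComponentSum I b p) (hp : monomial p (1 : k) ∉ I) : (survGraph I).Reachable a b := by
  obtain ⟨c, d, hc, hd, hac, -, rfl⟩ := ha
  obtain ⟨c', d', hc', hd', hbc', -, hsum⟩ := hb
  exact (hac.trans (survGraph_reachable_of_add_eq_add hc hd hc' hd' hsum.symm hp)).trans hbc'.symm

theorem exists_isComponentSum_trulyIsolated (hfin : (survivors I).Finite) {a : Fin n →₀ ℕ}
    (h : ∃ s, IsComponentSum I a s ∧ monomial s (1 : k) ∉ I) :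
    ∃ p, IsComponentSum I a p ∧ IsTrulyIsolated I p := by
  set T : Set (Fin n →₀ ℕ) := {s | IsComponentSum I a s ∧ monomial s (1 : k) ∉ I}
  have hTsurv : T ⊆ survivors I := by
    rintro _ ⟨⟨c, d, hc, -, -, -, rfl⟩, hs⟩
    exact ⟨fun h => hc (add_eq_zero.mp h).1, hs⟩
  obtain ⟨_, ⟨⟨c, d, hc, hd, hac, had, rfl⟩, hp⟩, hmax⟩ := (hfin.subset hTsurv).exists_maximal h
  refine ⟨c + d, ⟨c, d, hc, hd, hac, had, rfl⟩, hTsurv ⟨⟨c, d, hc, hd, hac, had, rfl⟩, hp⟩,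
    fun i => ?_⟩
  rw [X_mul_monomial_one]
  by_contra hi
  have hci : c + Finsupp.single i 1 ≠ 0 := fun h => hc (add_eq_zero.mp h).1
  have hsum : c + Finsupp.single i 1 + d = c + d + Finsupp.single i 1 := by abel
  have hdci := survGraph_reachable_of_add_le hd hci hi (by rw [add_comm, hsum])
  have hle := hmax ⟨⟨_, d, hci, hd, had.trans hdci, had, hsum⟩, hi⟩ le_self_add
  simpa using hle i

theorem exists_isComponentSum_of_adj_or_sq_not_mem {a : Fin n →₀ ℕ}
    (h : (∃ v, (survGraph I).Adj a v) ∨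
      ∃ t : Fin n, a = Finsupp.single t 1 ∧ monomial (Finsupp.single t 2) (1 : k) ∉ I) :
    ∃ s, IsComponentSum I a s ∧ monomial s (1 : k) ∉ I := by
  rcases h with ⟨v, hav⟩ | ⟨t, rfl, ht⟩
  · exact ⟨_, ⟨a, v, hav.2.1.1, hav.2.2.1.1, .refl a, hav.reachable, rfl⟩, hav.2.2.2⟩
  · have ht1 : Finsupp.single t 1 ≠ 0 := Finsupp.single_ne_zero.mpr one_ne_zero
    refine ⟨_, ⟨_, _, ht1, ht1, .refl _, .refl _, rfl⟩, ?_⟩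
    rwa [← Finsupp.single_add]

end

theorem two_components_two_truly_isolated_general
    {k : Type*} [Field k] {n : ℕ}
    (I : Ideal (MvPolynomial (Fin n) k))
    (hfin : (survivors I).Finite)
    (a b : (Fin n) →₀ ℕ)
    (hsep : ¬ (survGraph I).Reachable a b)
    (hanontriv : (∃ v, (survGraph I).Adj a v) ∨
      ∃ t : Fin n, a = Finsupp.single t 1 ∧
        monomial (Finsupp.single t 2) (1 : k) ∉ I)
    (hbnontriv : (∃ v, (survGraph I).Adj b v) ∨
      ∃ t : Fin n, b = Finsupp.single t 1 ∧
        monomial (Finsupp.single t 2) (1 : k) ∉ I) :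
    ∃ p ∈ survivors I, ∃ q ∈ survivors I, p ≠ q ∧
      (∀ i : Fin n, X i * monomial p (1 : k) ∈ I) ∧
      (∀ i : Fin n, X i * monomial q (1 : k) ∈ I) := by
  obtain ⟨p, hpa, hp⟩ :=
    exists_isComponentSum_trulyIsolated hfin (exists_isComponentSum_of_adj_or_sq_not_mem hanontriv)
  obtain ⟨q, hqb, hq⟩ :=
    exists_isComponentSum_trulyIsolated hfin (exists_isComponentSum_of_adj_or_sq_not_mem hbnontriv)
  refine ⟨p, hp.1, q, hq.1, ?_, hp.2, hq.2⟩
  rintro rfl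
  exact hsep (hpa.reachable hqb hp.1.2)

/-- If the survival complex contains two distinct nontrivial or quasi-trivially
connected components, then it contains at least two truly isolated points. -/
theorem two_components_two_truly_isolated
    {k : Type*} [Field k] {n : ℕ} (hn : 1 ≤ n)
    (I : Ideal (MvPolynomial (Fin n) k)) (hI : IsMonomialIdeal I)
    (hfin : (survivors I).Finite)
    (a b : (Fin n) →₀ ℕ) (ha : a ∈ survivors I) (hb : b ∈ survivors I)
    (hsep : ¬ (survGraph I).Reachable a b)
    (hanontriv : (∃ v, (survGraph I).Adj a v) ∨
      ∃ t : Fin n, a = Finsupp.single t 1 ∧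
        monomial (Finsupp.single t 2) (1 : k) ∉ I)
    (hbnontriv : (∃ v, (survGraph I).Adj b v) ∨
      ∃ t : Fin n, b = Finsupp.single t 1 ∧
        monomial (Finsupp.single t 2) (1 : k) ∉ I) :
    ∃ p ∈ survivors I, ∃ q ∈ survivors I, p ≠ q ∧
      (∀ i : Fin n, X i * monomial p (1 : k) ∈ I) ∧
      (∀ i : Fin n, X i * monomial q (1 : k) ∈ I) :=
  two_components_two_truly_isolated_general I hfin a b hsep hanontriv hbnontriv
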